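/- For distinct primes p and q and positive integers a, b, one has B(p^a q^b) ≥ min{p^a, q^b}, where B(n) is the maximal height of a monic-free integer polynomial divisor of x^n − 1. -/

import Mathlib

/-!
For coprime `m ≤ k` dividing `n`, the product `(1 + x + ⋯ + x^(m-1)) (1 + x + ⋯ + x^(k-1))` is the
product of the cyclotomic polynomials `Φ_d` over the divisors `d > 1` of `m` and of `k`; these are
distinct divisors of `n`, so it divides `x^n - 1`. Its coefficient of `x^(m-1)` is `m`.

Since `B` is a supremum in `ℕ`, it also needs the heights of divisors of `x^n - 1` to be bounded:
Mignotte's bound caps them by `2^n`, because the Mahler measure of `x^n - 1` is `1`.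
-/

open Polynomial

noncomputable def Height (f : Polynomial ℤ) : ℕ :=
  f.support.sup fun i => (f.coeff i).natAbs

noncomputable def Tsum (f : Polynomial ℤ) : ℕ :=
  ∑ i ∈ f.support, (f.coeff i).natAbs

noncomputable def B (n : ℕ) : ℕ :=
  sSup {h : ℕ | ∃ f : Polynomial ℤ, f ∣ X ^ n - 1 ∧ Height f = h}

open Finset

lemma natAbs_coeff_le_height (f : ℤ[X]) (i : ℕ) : (f.coeff i).natAbs ≤ Height f := by
  by_cases hi : i ∈ f.support
  · exact Finset.le_sup (f := fun i => (f.coeff i).natAbs) hi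
  · simp [notMem_support_iff.mp hi]

lemma mahlerMeasure_map_X_pow_sub_one {n : ℕ} (hn : 0 < n) :
    ((X ^ n - 1 : ℤ[X]).map (Int.castRingHom ℂ)).mahlerMeasure = 1 := by
  rw [← prod_cyclotomic_eq_X_pow_sub_one hn, Polynomial.map_prod, prod_eq_multiset_prod,
    prod_mahlerMeasure_eq_mahlerMeasure_prod]
  simpa using prod_eq_one fun d _ => by simpa using cyclotomic_mahlerMeasure_eq_one (R := ℂ) d

lemma natAbs_coeff_le_of_dvd_X_pow_sub_one {n : ℕ} (hn : 0 < n) {g : ℤ[X]}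
    (hg : g ∣ X ^ n - 1) (i : ℕ) : (g.coeff i).natAbs ≤ 2 ^ n := by
  obtain ⟨h, hgh⟩ := hg
  have hne : X ^ n - 1 ≠ (0 : ℤ[X]) := X_pow_sub_C_ne_zero hn 1
  have hdeg : g.natDegree ≤ n := by
    have := natDegree_le_of_dvd ⟨h, hgh⟩ hne
    rwa [← C_1, natDegree_X_pow_sub_C] at this
  have hmignotte := norm_coeff_le_choose_mul_mahlerMeasure_of_one_le_mahlerMeasure i
    (g.map (Int.castRingHom ℂ)) (h.map (Int.castRingHom ℂ))
    (one_le_mahlerMeasure_of_ne_zero (right_ne_zero_of_mul (hgh ▸ hne)))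
  rw [← Polynomial.map_mul, ← hgh, mahlerMeasure_map_X_pow_sub_one hn, mul_one,
    natDegree_map_eq_of_injective (RingHom.injective_int _), coeff_map, eq_intCast,
    Complex.norm_intCast, ← Int.cast_abs] at hmignotte
  have hchoose : (g.natDegree.choose i : ℝ) ≤ 2 ^ n :=
    mod_cast (g.natDegree.choose_le_two_pow i).trans (Nat.pow_le_pow_right two_pos hdeg)
  zify
  exact_mod_cast hmignotte.trans hchoose

lemma height_le_B_of_dvd {n : ℕ} (hn : 0 < n) {f : ℤ[X]} (hf : f ∣ X ^ n - 1) :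
    Height f ≤ B n := by
  refine le_csSup ⟨2 ^ n, ?_⟩ ⟨f, hf, rfl⟩
  rintro _ ⟨g, hg, rfl⟩
  exact Finset.sup_le fun i _ => natAbs_coeff_le_of_dvd_X_pow_sub_one hn hg i

lemma geom_sum_mul_geom_sum_dvd_X_pow_sub_one (R : Type*) [CommRing R] {m k n : ℕ}
    (hmk : m.Coprime k) (hm : m ∣ n) (hk : k ∣ n) (hn : n ≠ 0) :
    (∑ i ∈ range m, (X : R[X]) ^ i) * ∑ i ∈ range k, (X : R[X]) ^ i ∣ X ^ n - 1 := by
  have hdisj : Disjoint (m.divisors.erase 1) (k.divisors.erase 1) := by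
    refine disjoint_left.mpr fun d hdm hdk => ne_of_mem_erase hdm ?_
    exact Nat.eq_one_of_dvd_coprimes hmk (Nat.dvd_of_mem_divisors (mem_of_mem_erase hdm))
      (Nat.dvd_of_mem_divisors (mem_of_mem_erase hdk))
  have hsub : m.divisors.erase 1 ∪ k.divisors.erase 1 ⊆ n.divisors :=
    union_subset ((erase_subset _ _).trans (Nat.divisors_subset_of_dvd hn hm))
      ((erase_subset _ _).trans (Nat.divisors_subset_of_dvd hn hk))
  rw [← prod_cyclotomic_eq_geom_sum (Nat.pos_of_dvd_of_pos hm (Nat.pos_of_ne_zero hn)),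
    ← prod_cyclotomic_eq_geom_sum (Nat.pos_of_dvd_of_pos hk (Nat.pos_of_ne_zero hn)),
    ← prod_union hdisj, ← prod_cyclotomic_eq_X_pow_sub_one (Nat.pos_of_ne_zero hn)]
  exact prod_dvd_prod_of_subset _ _ _ hsub

lemma coeff_geom_sum_X {m j : ℕ} :
    (∑ i ∈ range m, (X : ℤ[X]) ^ i).coeff j = if j < m then 1 else 0 := by
  simp [coeff_X_pow]

lemma coeff_geom_sum_mul_geom_sum {m k j : ℕ} (hj : j < m) (hmk : m ≤ k) :
    ((∑ i ∈ range m, (X : ℤ[X]) ^ i) * ∑ i ∈ range k, (X : ℤ[X]) ^ i).coeff j = j + 1 := by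
  rw [coeff_mul, sum_congr rfl fun x hx => ?_, sum_const, Nat.card_antidiagonal, nsmul_one]
  · push_cast; rfl
  · rw [HasAntidiagonal.mem_antidiagonal] at hx
    simp only [coeff_geom_sum_X, mul_ite, ite_mul, one_mul, mul_one]
    rw [if_pos (by omega), if_pos (by omega)]

lemma min_le_B_of_coprime {m k n : ℕ} (hmk : m.Coprime k) (hm : m ∣ n) (hk : k ∣ n)
    (hn : n ≠ 0) : min m k ≤ B n := by
  wlog hle : m ≤ k generalizing m k
  · simpa [min_comm] using this hmk.symm hk hm (le_of_not_ge hle)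
  obtain ⟨j, rfl⟩ := Nat.exists_eq_succ_of_ne_zero (ne_zero_of_dvd_ne_zero hn hm)
  calc min (j + 1) k = j + 1 := min_eq_left hle
    _ = (((∑ i ∈ range (j + 1), (X : ℤ[X]) ^ i) * ∑ i ∈ range k, X ^ i).coeff j).natAbs := by
      rw [coeff_geom_sum_mul_geom_sum j.lt_succ_self hle]; rfl
    _ ≤ Height ((∑ i ∈ range (j + 1), X ^ i) * ∑ i ∈ range k, X ^ i) := natAbs_coeff_le_height _ _
    _ ≤ B n := height_le_B_of_dvd (Nat.pos_of_ne_zero hn)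
      (geom_sum_mul_geom_sum_dvd_X_pow_sub_one ℤ hmk hm hk hn)

theorem stmt_12_general (p q : ℕ) (hp : p.Prime) (hq : q.Prime) (hpq : p ≠ q)
    (a b : ℕ) :
    min (p ^ a) (q ^ b) ≤ B (p ^ a * q ^ b) :=
  min_le_B_of_coprime (Nat.Coprime.pow a b ((Nat.coprime_primes hp hq).mpr hpq))
    (dvd_mul_right _ _) (dvd_mul_left _ _) (mul_pos (pow_pos hp.pos a) (pow_pos hq.pos b)).ne'

theorem stmt_12 (p q : ℕ) (hp : p.Prime) (hq : q.Prime) (hpq : p ≠ q)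
    (a b : ℕ) (ha : 0 < a) (hb : 0 < b) :
    min (p ^ a) (q ^ b) ≤ B (p ^ a * q ^ b) :=
  stmt_12_general p q hp hq hpq a b
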